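/- arXiv:1907.09628 — 8 statements merged into one kernel-verified Lean document; each statement's English description precedes it below -/
import Mathlib

section
/- Let ψ: ℝ → ℝ be convex, let I = {a, a+1, ..., b} ⊂ ℤ, and define J(f) = Σ_{i=a+1}^{b} ψ(f(i) - f(i-1)) for f: I → ℝ. Fix f: I → ℝ and let K_f be the set of g: I → ℝ with g ≤ f, g(a) = f(a), g(b) = f(b). Then the infimum of J over K_f is attained at the lower convex envelope h of f (the pointwise supremum of all convex functions on I bounded above by f), i.e., inf_{g ∈ K_f} J(g) = J(h). -/
/-!
The envelope `h` is itself a convex minorant of `f`. It agrees with `f` at both endpoints (steep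
affine minorants through `(a, f a)` and `(b, f b)`) and at every interior point where its slope
strictly increases, since otherwise raising `h` slightly at that point would give a larger convex
minorant. For a competitor `g`, let `c i` be the right derivative of `ψ` at the slope
`h i - h (i - 1)`. The subgradient inequality gives
`J g ≥ J h + ∑ c i ((g - h) i - (g - h) (i - 1))`, and summation by parts turns the error term into
`∑ (c i - c (i + 1)) (g - h) i`. Convexity of `h` makes `c` nondecreasing, and wherever it increases
strictly we have `g ≤ f = h`, so every term is nonnegative.
-/

open Finset

theorem sum_Icc_mul_sub_by_parts {R : Type*} [CommRing R] (c e : ℤ → R) {a b : ℤ}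
    (hab : a ≤ b) :
    ∑ i ∈ Icc (a + 1) b, c i * (e i - e (i - 1)) =
      ∑ i ∈ Icc a b, (c i - c (i + 1)) * e i + c (b + 1) * e b - c a * e a := by
  induction b, hab using Int.leInduction with
  | base =>
    rw [Icc_eq_empty (by omega), sum_empty, Icc_self, sum_singleton]
    ring
  | succ b hab ih =>
    rw [← insert_Icc_right_eq_Icc_add_one (by omega), sum_insert (by simp), ih,
      ← insert_Icc_right_eq_Icc_add_one (by omega), sum_insert (by simp), add_sub_cancel_right]
    ring

theorem ConvexOn.add_rightDeriv_mul_sub_le {S : Set ℝ} {ψ : ℝ → ℝ} (hψ : ConvexOn ℝ S ψ)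
    {t y : ℝ} (ht : t ∈ interior S) (hy : y ∈ S) :
    ψ t + derivWithin ψ (Set.Ioi t) t * (y - t) ≤ ψ y := by
  rcases lt_trichotomy t y with hty | rfl | hyt
  · have := hψ.rightDeriv_le_slope_of_mem_interior ht hy hty
    rw [slope_def_field, le_div_iff₀ (sub_pos.2 hty)] at this
    linarith
  · simp
  · have := (hψ.slope_le_leftDeriv_of_mem_interior hy ht hyt).trans
      (hψ.leftDeriv_le_rightDeriv_of_mem_interior ht)
    rw [slope_def_field, div_le_iff₀ (sub_pos.2 hyt)] at this
    linarith

def DiscreteConvexOn (a b : ℤ) (g : ℤ → ℝ) : Prop :=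
  ∀ i, a ≤ i → i + 2 ≤ b → g (i + 1) - g i ≤ g (i + 2) - g (i + 1)

namespace DiscreteConvexOn

variable {a b : ℤ} {g : ℤ → ℝ}

theorem affine (m c : ℝ) : DiscreteConvexOn a b fun x => m * x + c := by
  intro i _ _
  push_cast
  linarith

theorem sub_le_sub (hg : DiscreteConvexOn a b g) {i : ℤ} (hai : a < i) (hib : i < b) :
    g i - g (i - 1) ≤ g (i + 1) - g i := by
  have := hg (i - 1) (by omega) (by omega)
  rwa [sub_add_cancel, show i - 1 + 2 = i + 1 by ring] at this

theorem update_add (hg : DiscreteConvexOn a b g) {p : ℤ} {δ : ℝ} (hδ : 0 ≤ δ)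
    (hslack : g p + δ - g (p - 1) ≤ g (p + 1) - (g p + δ)) :
    DiscreteConvexOn a b (Function.update g p (g p + δ)) := by
  intro i hai hib
  have := hg i hai hib
  -- raising `g p` only helps the inequalities centred at `p ± 1`; `hslack` is the one centred at `p`
  simp only [Function.update_apply]
  split_ifs <;> subst_vars <;> first | omega | linarith | (ring_nf at hslack ⊢; linarith)

end DiscreteConvexOn

def IsLowerConvexEnvelope (a b : ℤ) (f h : ℤ → ℝ) : Prop :=
  ∀ i ∈ Set.Icc a b, IsLUB
    {y : ℝ | ∃ g : ℤ → ℝ, DiscreteConvexOn a b g ∧ (∀ j ∈ Set.Icc a b, g j ≤ f j) ∧ y = g i}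
    (h i)

theorem exists_abs_sub_le_mul_abs_sub (f : ℤ → ℝ) (a b p : ℤ) :
    ∃ M : ℝ, ∀ j ∈ Set.Icc a b, |f j - f p| ≤ M * |(j : ℝ) - p| := by
  refine ⟨∑ k ∈ Icc a b, |f k - f p|, fun j hj => ?_⟩
  rcases eq_or_ne j p with rfl | hjp
  · simp
  have hM : |f j - f p| ≤ ∑ k ∈ Icc a b, |f k - f p| :=
    single_le_sum (fun k _ => abs_nonneg (f k - f p)) (mem_Icc.2 hj)
  have hjp' : (1 : ℝ) ≤ |(j : ℝ) - p| := by
    exact_mod_cast Int.one_le_abs (sub_ne_zero.2 hjp)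
  nlinarith [abs_nonneg (f j - f p)]

namespace IsLowerConvexEnvelope

variable {a b : ℤ} {f h : ℤ → ℝ}

theorem le_of_minorant (hh : IsLowerConvexEnvelope a b f h) {g : ℤ → ℝ}
    (hg : DiscreteConvexOn a b g) (hgf : ∀ j ∈ Set.Icc a b, g j ≤ f j) {i : ℤ}
    (hi : i ∈ Set.Icc a b) : g i ≤ h i :=
  (hh i hi).1 ⟨g, hg, hgf, rfl⟩

theorem le (hh : IsLowerConvexEnvelope a b f h) {i : ℤ} (hi : i ∈ Set.Icc a b) : h i ≤ f i :=
  (hh i hi).2 fun _ ⟨_, _, hgf, hy⟩ => hy ▸ hgf i hi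

theorem discreteConvexOn (hh : IsLowerConvexEnvelope a b f h) : DiscreteConvexOn a b h := by
  intro i hai hib
  suffices h (i + 1) ≤ (h i + h (i + 2)) / 2 by linarith
  refine (hh (i + 1) ⟨by omega, by omega⟩).2 ?_
  rintro _ ⟨g, hg, hgf, rfl⟩
  have hgi := hh.le_of_minorant hg hgf (i := i) ⟨hai, by omega⟩
  have hgi2 := hh.le_of_minorant hg hgf (i := i + 2) ⟨by omega, hib⟩
  linarith [hg i hai hib]

theorem eq_of_affine_minorant (hh : IsLowerConvexEnvelope a b f h) {p : ℤ}
    (hp : p ∈ Set.Icc a b) (m : ℝ) (hm : ∀ j ∈ Set.Icc a b, f p + m * (j - p) ≤ f j) :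
    h p = f p := by
  refine le_antisymm (hh.le hp) ?_
  have hg : DiscreteConvexOn a b fun x => f p + m * (x - p) := by
    simpa only [add_comm, mul_sub, sub_add_eq_add_sub, add_sub_assoc]
      using DiscreteConvexOn.affine (a := a) (b := b) m (f p - m * p)
  simpa using hh.le_of_minorant hg hm hp

theorem eq_left (hh : IsLowerConvexEnvelope a b f h) (hab : a ≤ b) : h a = f a := by
  obtain ⟨M, hM⟩ := exists_abs_sub_le_mul_abs_sub f a b a
  refine hh.eq_of_affine_minorant ⟨le_refl a, hab⟩ (-M) fun j hj => ?_
  have := hM j hj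
  rw [abs_of_nonneg (sub_nonneg.2 (Int.cast_le.2 hj.1))] at this
  linarith [neg_abs_le (f j - f a)]

theorem eq_right (hh : IsLowerConvexEnvelope a b f h) (hab : a ≤ b) : h b = f b := by
  obtain ⟨M, hM⟩ := exists_abs_sub_le_mul_abs_sub f a b b
  refine hh.eq_of_affine_minorant ⟨hab, le_refl b⟩ M fun j hj => ?_
  have := hM j hj
  rw [abs_of_nonpos (sub_nonpos.2 (Int.cast_le.2 hj.2))] at this
  linarith [neg_abs_le (f j - f b)]

theorem eq_of_sub_lt_sub (hh : IsLowerConvexEnvelope a b f h) {p : ℤ} (hap : a < p) (hpb : p < b)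
    (hslope : h p - h (p - 1) < h (p + 1) - h p) : h p = f p := by
  have hp : p ∈ Set.Icc a b := ⟨hap.le, hpb.le⟩
  refine le_antisymm (hh.le hp) (not_lt.1 fun hlt => ?_)
  set δ := min (f p - h p) ((h (p + 1) - 2 * h p + h (p - 1)) / 2)
  have hδ : 0 < δ := lt_min (by linarith) (by linarith)
  obtain ⟨hδf, hδslack⟩ := le_min_iff.1 (le_refl δ)
  have hconv := hh.discreteConvexOn.update_add (p := p) hδ.le (by linarith)
  have hle : ∀ j ∈ Set.Icc a b, Function.update h p (h p + δ) j ≤ f j := by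
    intro j hj
    rcases eq_or_ne j p with rfl | hjp
    · simp only [Function.update_self]
      linarith
    · simpa [hjp] using hh.le hj
  have := hh.le_of_minorant hconv hle hp
  simp only [Function.update_self] at this
  linarith

end IsLowerConvexEnvelope

noncomputable def discreteEnergy (ψ : ℝ → ℝ) (a b : ℤ) (g : ℤ → ℝ) : ℝ :=
  ∑ i ∈ Icc (a + 1) b, ψ (g i - g (i - 1))

theorem discreteEnergy_le {ψ : ℝ → ℝ} (hψ : ConvexOn ℝ Set.univ ψ) {a b : ℤ} (hab : a ≤ b)
    {g h : ℤ → ℝ} (hh : DiscreteConvexOn a b h) (ha : g a = h a) (hb : g b = h b)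
    (hgh : ∀ i, a < i → i < b → h i - h (i - 1) < h (i + 1) - h i → g i ≤ h i) :
    discreteEnergy ψ a b h ≤ discreteEnergy ψ a b g := by
  set c : ℤ → ℝ := fun i => derivWithin ψ (Set.Ioi (h i - h (i - 1))) (h i - h (i - 1))
  have hc : ∀ i, a < i → i < b → c i ≤ c (i + 1) := by
    intro i hai hib
    have := hψ.monotoneOn_rightDeriv (by simp) (by simp) (hh.sub_le_sub hai hib)
    simpa [c] using this
  have hterm : ∀ i ∈ Icc a b, 0 ≤ (c i - c (i + 1)) * (g i - h i) := by
    intro i hi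
    obtain ⟨hai, hib⟩ := mem_Icc.1 hi
    rcases hai.eq_or_lt with rfl | hai
    · simp [ha]
    rcases hib.eq_or_lt with rfl | hib
    · simp [hb]
    rcases (hh.sub_le_sub hai hib).eq_or_lt with heq | hlt
    · simp [c, heq]
    · exact mul_nonneg_of_nonpos_of_nonpos (sub_nonpos.2 (hc i hai hib))
        (sub_nonpos.2 (hgh i hai hib hlt))
  have hparts : ∑ i ∈ Icc (a + 1) b, c i * ((g i - h i) - (g (i - 1) - h (i - 1))) =
      ∑ i ∈ Icc a b, (c i - c (i + 1)) * (g i - h i) := by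
    rw [sum_Icc_mul_sub_by_parts c (fun i => g i - h i) hab, ha, hb]
    simp
  calc ∑ i ∈ Icc (a + 1) b, ψ (h i - h (i - 1))
      ≤ ∑ i ∈ Icc (a + 1) b,
          (ψ (h i - h (i - 1)) + c i * ((g i - h i) - (g (i - 1) - h (i - 1)))) := by
        rw [sum_add_distrib, hparts]
        linarith [sum_nonneg hterm]
    _ ≤ ∑ i ∈ Icc (a + 1) b, ψ (g i - g (i - 1)) := sum_le_sum fun i _ => by
        have := hψ.add_rightDeriv_mul_sub_le (t := h i - h (i - 1)) (y := g i - g (i - 1))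
          (by simp) (Set.mem_univ _)
        rwa [sub_sub_sub_comm] at this

/-- On a discrete interval `I = {a,...,b} ⊂ ℤ`, with `ψ` convex and
`J g = ∑_{i=a+1}^b ψ(g i - g (i-1))`, the infimum of `J` over
`K_f = {g ≤ f on I, g a = f a, g b = f b}` equals `J h`, where `h` is the
lower convex envelope of `f` (sup of discretely convex functions below `f` on `I`). -/
theorem stmt0 (a b : ℤ) (hab : a ≤ b) (ψ : ℝ → ℝ) (hψ : ConvexOn ℝ Set.univ ψ)
    (f h : ℤ → ℝ)
    (DConvex : (ℤ → ℝ) → Prop)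
    (hDConvex : ∀ g, DConvex g ↔
      ∀ i : ℤ, a ≤ i → i + 2 ≤ b → g (i + 1) - g i ≤ g (i + 2) - g (i + 1))
    (J : (ℤ → ℝ) → ℝ)
    (hJ : ∀ g, J g = ∑ i ∈ Finset.Icc (a + 1) b, ψ (g i - g (i - 1)))
    (hh : ∀ i ∈ Set.Icc a b,
      IsLUB {y : ℝ | ∃ g : ℤ → ℝ, DConvex g ∧ (∀ j ∈ Set.Icc a b, g j ≤ f j) ∧ y = g i}
        (h i)) :
    sInf (J '' {g : ℤ → ℝ | (∀ j ∈ Set.Icc a b, g j ≤ f j) ∧ g a = f a ∧ g b = f b})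
      = J h := by
  obtain rfl : DConvex = DiscreteConvexOn a b := funext fun g => propext (hDConvex g)
  obtain rfl : J = discreteEnergy ψ a b := funext hJ
  have henv : IsLowerConvexEnvelope a b f h := hh
  refine IsLeast.csInf_eq ⟨⟨h, ⟨fun j hj => henv.le hj, henv.eq_left hab, henv.eq_right hab⟩,
    rfl⟩, ?_⟩
  rintro _ ⟨g, ⟨hgf, hga, hgb⟩, rfl⟩
  refine discreteEnergy_le hψ hab henv.discreteConvexOn (hga.trans (henv.eq_left hab).symm)
    (hgb.trans (henv.eq_right hab).symm) fun i hai hib hslope => ?_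
  rw [henv.eq_of_sub_lt_sub hai hib hslope]
  exact hgf i ⟨hai.le, hib.le⟩
end

section
/- Let ψ: ℝ → ℝ be convex with minimum attained at 0, let I = {a,...,b} ⊂ ℤ, and define J(f) = Σ_{i=a+1}^b ψ(f(i)-f(i-1)). Fix f: I → ℝ and let K̄_f = {g: I → ℝ : g ≤ f, g(a) = f(a)}. Then inf_{g ∈ K̄_f} J(g) = J(h̄), where h̄ is the decreasing lower convex envelope of f (the supremum of all convex weakly decreasing functions on I which are ≤ f). -/
/-!
The envelope `h̄` is itself convex and decreasing, equals `f` at `a`, and touches `f` wherever its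
slope strictly increases, where `h̄` is continued as a constant beyond `b`, so that a negative last
slope counts as a kink at `b`. Let `cᵢ` be a subgradient of `ψ` at the slope `Δh̄ᵢ`, chosen
monotone in the slope and vanishing at slope `0`. For admissible `g` and `u = g - h̄`, convexity of
`ψ` gives `J g - J h̄ ≥ ∑ cᵢ Δuᵢ`, which by summation by parts equals `∑ (cᵢ - cᵢ₊₁) uᵢ` because
`u a = 0` and `c_{b+1} = 0`. Every term is nonnegative: `cᵢ ≤ cᵢ₊₁`, and where the inequality is
strict `h̄` touches `f`, so `uᵢ ≤ 0`.
-/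

open Set

/-- Clipping at `0` makes this vanish at the minimiser `0` of `ψ`, while it remains a subgradient
of `ψ` at every `s ≤ 0`. -/
noncomputable def clippedRightDeriv (ψ : ℝ → ℝ) (s : ℝ) : ℝ :=
  min (derivWithin ψ (Ioi s) s) 0

namespace ConvexOn

variable {ψ : ℝ → ℝ}

lemma monotone_clippedRightDeriv (hψ : ConvexOn ℝ univ ψ) : Monotone (clippedRightDeriv ψ) :=
  fun _ _ hst => min_le_min_right 0 <|
    hψ.monotoneOn_rightDeriv (by simp) (by simp) hst

lemma clippedRightDeriv_zero (hψ : ConvexOn ℝ univ ψ) (hψ0 : ∀ x, ψ 0 ≤ ψ x) :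
    clippedRightDeriv ψ 0 = 0 := by
  refine min_eq_right ?_
  rw [hψ.rightDeriv_eq_sInf_slope_of_mem_interior (by simp)]
  refine le_csInf ⟨_, 1, ⟨mem_univ _, one_pos⟩, rfl⟩ ?_
  rintro _ ⟨y, ⟨-, hy : 0 < y⟩, rfl⟩
  rw [slope_def_field]
  exact div_nonneg (sub_nonneg.2 (hψ0 y)) (by linarith)

lemma add_clippedRightDeriv_mul_le (hψ : ConvexOn ℝ univ ψ) (hψ0 : ∀ x, ψ 0 ≤ ψ x)
    {s : ℝ} (hs : s ≤ 0) (x : ℝ) : ψ s + clippedRightDeriv ψ s * (x - s) ≤ ψ x := by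
  rcases lt_trichotomy x s with hxs | rfl | hsx
  · have hslope : slope ψ x s ≤ clippedRightDeriv ψ s := by
      refine le_min ((hψ.slope_le_leftDeriv_of_mem_interior (mem_univ x) (by simp) hxs).trans
        (hψ.leftDeriv_le_rightDeriv_of_mem_interior (by simp))) ?_
      have hx0 : x < 0 := hxs.trans_le hs
      calc slope ψ x s ≤ slope ψ x 0 :=
            hψ.slope_mono (mem_univ x) ⟨mem_univ s, hxs.ne'⟩ ⟨mem_univ 0, hx0.ne'⟩ hs
        _ ≤ 0 := by
            rw [slope_def_field]
            exact div_nonpos_of_nonpos_of_nonneg (by linarith [hψ0 x]) (by linarith)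
    rw [slope_def_field, div_le_iff₀ (by linarith)] at hslope
    linarith
  · simp
  · have hslope : clippedRightDeriv ψ s ≤ slope ψ s x :=
      (min_le_left _ _).trans (hψ.rightDeriv_le_slope_of_mem_interior (by simp) (mem_univ x) hsx)
    rw [slope_def_field, le_div_iff₀ (by linarith)] at hslope
    linarith

end ConvexOn

lemma Int.sum_Icc_sub_pred {M : Type*} [AddCommGroup M] (F : ℤ → M) {a b : ℤ} (hab : a ≤ b) :
    ∑ i ∈ Finset.Icc (a + 1) b, (F i - F (i - 1)) = F b - F a := by
  induction b, hab using Int.leInduction with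
  | base => simp
  | succ b hab ih =>
    rw [← Finset.insert_Icc_right_eq_Icc_add_one (by omega),
      Finset.sum_insert (by simp), ih, add_sub_cancel_right]
    abel

lemma Int.sum_Icc_mul_sub_pred (C u : ℤ → ℝ) {a b : ℤ} (hab : a ≤ b) :
    ∑ i ∈ Finset.Icc (a + 1) b, C i * (u i - u (i - 1)) =
      ∑ i ∈ Finset.Icc (a + 1) b, (C i - C (i + 1)) * u i
        + (C (b + 1) * u b - C (a + 1) * u a) := by
  rw [← Int.sum_Icc_sub_pred (fun i => C (i + 1) * u i) hab, ← Finset.sum_add_distrib]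
  refine Finset.sum_congr rfl fun i _ => ?_
  simp only [sub_add_cancel]
  ring

def ConvexDecrOn (a b : ℤ) (g : ℤ → ℝ) : Prop :=
  (∀ i : ℤ, a ≤ i → i + 2 ≤ b → g (i + 1) - g i ≤ g (i + 2) - g (i + 1)) ∧
  (∀ i : ℤ, a ≤ i → i + 1 ≤ b → g (i + 1) ≤ g i)

/-- The increments of `g` continued as a constant to the right of `b`. -/
def extSlope (b : ℤ) (g : ℤ → ℝ) (i : ℤ) : ℝ :=
  g (min i b) - g (min (i - 1) b)

lemma extSlope_of_le {b i : ℤ} (g : ℤ → ℝ) (hi : i ≤ b) : extSlope b g i = g i - g (i - 1) := by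
  rw [extSlope, min_eq_left hi, min_eq_left (by omega)]

lemma extSlope_of_lt {b i : ℤ} (g : ℤ → ℝ) (hi : b < i) : extSlope b g i = 0 := by
  rw [extSlope, min_eq_right hi.le, min_eq_right (by omega), sub_self]

namespace ConvexDecrOn

variable {a b : ℤ} {g : ℤ → ℝ}

lemma extSlope_nonpos (hg : ConvexDecrOn a b g) {i : ℤ} (hi : a < i) : extSlope b g i ≤ 0 := by
  rcases le_or_gt i b with hib | hbi
  · have := hg.2 (i - 1) (by omega) (by omega)
    rw [sub_add_cancel] at this
    rw [extSlope_of_le g hib]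
    linarith
  · exact (extSlope_of_lt g hbi).le

lemma extSlope_le_succ (hg : ConvexDecrOn a b g) {i : ℤ} (hai : a < i) (hib : i ≤ b) :
    extSlope b g i ≤ extSlope b g (i + 1) := by
  rcases lt_or_eq_of_le hib with hib | rfl
  · have := hg.1 (i - 1) (by omega) (by omega)
    rw [extSlope_of_le g hib.le, extSlope_of_le g (by omega), add_sub_cancel_right]
    rwa [show i - 1 + 1 = i by ring, show i - 1 + 2 = i + 1 by ring] at this
  · rw [extSlope_of_lt g (lt_add_one i)]
    exact hg.extSlope_nonpos hai

lemma update_add (hg : ConvexDecrOn a b g) {i : ℤ} {ε : ℝ} (hε : 0 ≤ ε)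
    (hdec : g i + ε ≤ g (i - 1))
    (hgap : i + 1 ≤ b → 2 * ε ≤ (g (i + 1) - g i) - (g i - g (i - 1))) :
    ConvexDecrOn a b (Function.update g i (g i + ε)) := by
  constructor
  · intro k hk hkb
    have := hg.1 k hk hkb
    simp only [Function.update_apply]
    grind
  · intro k hk hkb
    have := hg.2 k hk hkb
    simp only [Function.update_apply]
    grind

end ConvexDecrOn

def IsDecrConvexEnvelope (a b : ℤ) (f h : ℤ → ℝ) : Prop :=
  ∀ i ∈ Set.Icc a b,
    IsLUB {y : ℝ | ∃ g : ℤ → ℝ, ConvexDecrOn a b g ∧ (∀ j ∈ Set.Icc a b, g j ≤ f j) ∧ y = g i} (h i)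

namespace IsDecrConvexEnvelope

variable {a b : ℤ} {f h : ℤ → ℝ}

lemma le_apply (henv : IsDecrConvexEnvelope a b f h) {g : ℤ → ℝ} (hg : ConvexDecrOn a b g)
    (hgf : ∀ j ∈ Set.Icc a b, g j ≤ f j) {i : ℤ} (hi : i ∈ Set.Icc a b) : g i ≤ h i :=
  (henv i hi).1 ⟨g, hg, hgf, rfl⟩

lemma apply_le (henv : IsDecrConvexEnvelope a b f h) {i : ℤ} (hi : i ∈ Set.Icc a b) : h i ≤ f i :=
  (henv i hi).2 fun _ ⟨_, _, hgf, hy⟩ => hy ▸ hgf i hi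

lemma apply_le_of_forall (henv : IsDecrConvexEnvelope a b f h) {i : ℤ} (hi : i ∈ Set.Icc a b)
    {c : ℝ} (hc : ∀ g, ConvexDecrOn a b g → (∀ j ∈ Set.Icc a b, g j ≤ f j) → g i ≤ c) :
    h i ≤ c :=
  (henv i hi).2 fun _ ⟨g, hg, hgf, hy⟩ => hy ▸ hc g hg hgf

lemma convexDecrOn (henv : IsDecrConvexEnvelope a b f h) : ConvexDecrOn a b h := by
  constructor
  · intro i hai hib
    have hmid : h (i + 1) ≤ (h i + h (i + 2)) / 2 :=
      henv.apply_le_of_forall ⟨by omega, by omega⟩ fun g hg hgf => by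
        linarith [hg.1 i hai hib, henv.le_apply hg hgf ⟨hai, by omega⟩,
          henv.le_apply hg hgf ⟨by omega, hib⟩]
    linarith
  · intro i hai hib
    exact henv.apply_le_of_forall ⟨by omega, hib⟩ fun g hg hgf =>
      (hg.2 i hai hib).trans (henv.le_apply hg hgf ⟨hai, by omega⟩)

lemma apply_left (henv : IsDecrConvexEnvelope a b f h) (hab : a ≤ b) : h a = f a := by
  have ha : a ∈ Set.Icc a b := ⟨le_rfl, hab⟩
  refine (henv.apply_le ha).antisymm ?_
  obtain ⟨m, hm⟩ := ((Set.finite_Icc a b).image f).bddBelow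
  have hmf : ∀ j ∈ Set.Icc a b, m ≤ f j := fun j hj => hm ⟨j, hj, rfl⟩
  let g : ℤ → ℝ := fun j => if j ≤ a then f a else m
  have hg : ConvexDecrOn a b g := by
    have := hmf a ha
    constructor <;> intro i hai _ <;> simp only [g] <;> split_ifs <;> first | omega | linarith
  have hgf : ∀ j ∈ Set.Icc a b, g j ≤ f j := by
    intro j hj
    simp only [g]
    split_ifs with hja
    · rw [le_antisymm hja hj.1]
    · exact hmf j hj
  simpa [g] using henv.le_apply hg hgf ha

/-- Otherwise the envelope could be raised at `i`. -/
lemma apply_eq_of_extSlope_lt (henv : IsDecrConvexEnvelope a b f h) {i : ℤ} (hai : a < i)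
    (hib : i ≤ b) (hkink : extSlope b h i < extSlope b h (i + 1)) : h i = f i := by
  have hi : i ∈ Set.Icc a b := ⟨hai.le, hib⟩
  have hconv := henv.convexDecrOn
  refine (henv.apply_le hi).antisymm (not_lt.1 fun hlt => ?_)
  set ε := min (f i - h i) ((extSlope b h (i + 1) - extSlope b h i) / 2)
  have hε : 0 < ε := lt_min (by linarith) (by linarith)
  have hεf : ε ≤ f i - h i := min_le_left _ _
  have hεgap : 2 * ε ≤ extSlope b h (i + 1) - extSlope b h i := by
    linarith [min_le_right (f i - h i) ((extSlope b h (i + 1) - extSlope b h i) / 2)]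
  have hnext := hconv.extSlope_nonpos (i := i + 1) (by omega)
  rw [extSlope_of_le h hib] at hεgap
  have hbump : ConvexDecrOn a b (Function.update h i (h i + ε)) := by
    refine hconv.update_add hε.le (by linarith) fun hi1 => ?_
    rwa [extSlope_of_le h hi1, add_sub_cancel_right] at hεgap
  have hbump_le : ∀ j ∈ Set.Icc a b, Function.update h i (h i + ε) j ≤ f j := by
    intro j hj
    rcases eq_or_ne j i with rfl | hji
    · simp only [Function.update_self]; linarith
    · simpa only [Function.update_of_ne hji] using henv.apply_le hj
  have := henv.le_apply hbump hbump_le hi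
  simp only [Function.update_self] at this
  linarith

end IsDecrConvexEnvelope

noncomputable def incrementEnergy (ψ : ℝ → ℝ) (a b : ℤ) (g : ℤ → ℝ) : ℝ :=
  ∑ i ∈ Finset.Icc (a + 1) b, ψ (g i - g (i - 1))

theorem IsDecrConvexEnvelope.incrementEnergy_le {ψ : ℝ → ℝ} (hψ : ConvexOn ℝ univ ψ)
    (hψ0 : ∀ x, ψ 0 ≤ ψ x) {a b : ℤ} (hab : a ≤ b) {f h : ℤ → ℝ}
    (henv : IsDecrConvexEnvelope a b f h) {g : ℤ → ℝ} (hgf : ∀ j ∈ Set.Icc a b, g j ≤ f j)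
    (hga : g a = f a) : incrementEnergy ψ a b h ≤ incrementEnergy ψ a b g := by
  have hconv := henv.convexDecrOn
  set C : ℤ → ℝ := fun i => clippedRightDeriv ψ (extSlope b h i)
  set u : ℤ → ℝ := fun j => g j - h j
  have hua : u a = 0 := by simp [u, hga, henv.apply_left hab]
  have hCb : C (b + 1) = 0 := by
    simp [C, extSlope_of_lt h (lt_add_one b), hψ.clippedRightDeriv_zero hψ0]
  have hsubgrad : ∀ i ∈ Finset.Icc (a + 1) b,
      ψ (h i - h (i - 1)) + C i * (u i - u (i - 1)) ≤ ψ (g i - g (i - 1)) := by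
    intro i hi
    obtain ⟨hai, hib⟩ := Finset.mem_Icc.1 hi
    have := hψ.add_clippedRightDeriv_mul_le hψ0 (hconv.extSlope_nonpos (i := i) (by omega))
      (g i - g (i - 1))
    simp only [C, u, extSlope_of_le h hib] at this ⊢
    linarith
  have hterm : ∀ i ∈ Finset.Icc (a + 1) b, 0 ≤ (C i - C (i + 1)) * u i := by
    intro i hi
    obtain ⟨hai, hib⟩ := Finset.mem_Icc.1 hi
    have hmono := hψ.monotone_clippedRightDeriv
    rcases (hmono (hconv.extSlope_le_succ (i := i) (by omega) hib)).eq_or_lt with heq | hlt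
    · simp [C, heq]
    · have hcontact := henv.apply_eq_of_extSlope_lt (by omega) hib (hmono.reflect_lt hlt)
      exact mul_nonneg_of_nonpos_of_nonpos (by linarith)
        (by simpa [u, hcontact] using hgf i ⟨by omega, hib⟩)
  calc incrementEnergy ψ a b h
      ≤ incrementEnergy ψ a b h + ∑ i ∈ Finset.Icc (a + 1) b, C i * (u i - u (i - 1)) := by
        rw [Int.sum_Icc_mul_sub_pred C u hab, hCb, hua, zero_mul, mul_zero, sub_zero, add_zero]
        exact le_add_of_nonneg_right (Finset.sum_nonneg hterm)
    _ ≤ incrementEnergy ψ a b g := by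
        rw [incrementEnergy, ← Finset.sum_add_distrib]
        exact Finset.sum_le_sum hsubgrad

/-- With `ψ` convex attaining its minimum at `0`, the infimum of
`J g = ∑_{i=a+1}^b ψ(g i - g (i-1))` over `K̄_f = {g ≤ f on I, g a = f a}` equals
`J h̄`, where `h̄` is the decreasing lower convex envelope of `f`
(sup of discretely convex, weakly decreasing functions below `f` on `I`). -/
theorem stmt1 (a b : ℤ) (hab : a ≤ b) (ψ : ℝ → ℝ) (hψ : ConvexOn ℝ Set.univ ψ)
    (hψ0 : ∀ x : ℝ, ψ 0 ≤ ψ x)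
    (f hbar : ℤ → ℝ)
    (DConvexDecr : (ℤ → ℝ) → Prop)
    (hDConvexDecr : ∀ g, DConvexDecr g ↔
      ((∀ i : ℤ, a ≤ i → i + 2 ≤ b → g (i + 1) - g i ≤ g (i + 2) - g (i + 1)) ∧
       (∀ i : ℤ, a ≤ i → i + 1 ≤ b → g (i + 1) ≤ g i)))
    (J : (ℤ → ℝ) → ℝ)
    (hJ : ∀ g, J g = ∑ i ∈ Finset.Icc (a + 1) b, ψ (g i - g (i - 1)))
    (hhbar : ∀ i ∈ Set.Icc a b,
      IsLUB {y : ℝ | ∃ g : ℤ → ℝ, DConvexDecr g ∧ (∀ j ∈ Set.Icc a b, g j ≤ f j) ∧ y = g i}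
        (hbar i)) :
    sInf (J '' {g : ℤ → ℝ | (∀ j ∈ Set.Icc a b, g j ≤ f j) ∧ g a = f a})
      = J hbar := by
  obtain rfl : DConvexDecr = ConvexDecrOn a b := funext fun g => propext (hDConvexDecr g)
  obtain rfl : J = incrementEnergy ψ a b := funext hJ
  have henv : IsDecrConvexEnvelope a b f hbar := hhbar
  refine IsLeast.csInf_eq ⟨⟨hbar, ⟨fun j hj => henv.apply_le hj, henv.apply_left hab⟩, rfl⟩, ?_⟩
  rintro _ ⟨g, ⟨hgf, hga⟩, rfl⟩
  exact henv.incrementEnergy_le hψ hψ0 hab hgf hga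
end

section
/- Define φ(x) = log 2 - (1/2)((1+x)log(1+x) + (1-x)log(1-x)). Then ∫_0^∞ φ(tanh u) du = 2·∫_0^∞ log(1 + e^{-2u}) du = π²/12. -/
/-!
Write `q = e^{-2u}`. Since `1 + tanh u = 2/(1+q)` and `1 - tanh u = 2q/(1+q)`, the integrand is
`φ(tanh u) = log(1+q) + 2u·q/(1+q)`. Expanding both terms in alternating power series of `q`,
the `n`-th terms integrate to `1/(2(n+1)²)` in both cases (by `∫₀^∞ uᵏ e^{-cu} du = k!/c^{k+1}`),
and the series of absolute values converges, so both integrals equal `η(2)/2 = π²/24`.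
-/

open MeasureTheory Real Set

lemma one_add_tanh_eq (u : ℝ) : 1 + tanh u = 2 / (1 + exp (-2 * u)) := by
  have h : exp (-2 * u) = exp (-u) / exp u := by rw [← exp_sub]; ring_nf
  rw [tanh_eq, h]
  field_simp
  ring

lemma one_sub_tanh_eq (u : ℝ) : 1 - tanh u = 2 * exp (-2 * u) / (1 + exp (-2 * u)) := by
  have h : exp (-2 * u) = exp (-u) / exp u := by rw [← exp_sub]; ring_nf
  rw [tanh_eq, h]
  field_simp
  ring

lemma log_two_sub_entropy_tanh_eq (u : ℝ) :
    log 2 - 1 / 2 * ((1 + tanh u) * log (1 + tanh u) + (1 - tanh u) * log (1 - tanh u))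
      = log (1 + exp (-2 * u)) + 2 * u * (exp (-2 * u) / (1 + exp (-2 * u))) := by
  have hpos : 0 < 1 + exp (-2 * u) := by positivity
  have hplus : log (1 + tanh u) = log 2 - log (1 + exp (-2 * u)) := by
    rw [one_add_tanh_eq, log_div two_ne_zero hpos.ne']
  have hminus : log (1 - tanh u) = log 2 - 2 * u - log (1 + exp (-2 * u)) := by
    rw [one_sub_tanh_eq, log_div (by positivity) hpos.ne', log_mul two_ne_zero (exp_pos _).ne',
      log_exp]
    ring
  rw [hplus, hminus]
  linear_combination u * one_sub_tanh_eq u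

lemma hasSum_one_div_add_one_sq :
    HasSum (fun n : ℕ => 1 / ((n : ℝ) + 1) ^ 2) (π ^ 2 / 6) := by
  simpa using (hasSum_nat_add_iff' 1).2 hasSum_zeta_two

lemma hasSum_alternating_one_div_add_one_sq :
    HasSum (fun n : ℕ => (-1 : ℝ) ^ n / ((n : ℝ) + 1) ^ 2) (π ^ 2 / 12) := by
  -- The summand of `hodd` vanishes at even `n` and equals `1 / (2 (k + 1) ^ 2)` at `n = 2k + 1`.
  have hodd : HasSum (fun n : ℕ => (1 - (-1) ^ n) / ((n : ℝ) + 1) ^ 2) (π ^ 2 / 12) := by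
    have h := hasSum_one_div_add_one_sq.mul_left (1 / 2)
    rw [show (1 : ℝ) / 2 * (π ^ 2 / 6) = π ^ 2 / 12 by ring] at h
    rw [← zero_add (π ^ 2 / 12)]
    refine .even_add_odd (by simp [hasSum_zero]) (h.congr_fun fun k => ?_)
    rw [pow_succ, pow_mul]
    push_cast
    field_simp
    ring
  have h := hasSum_one_div_add_one_sq.sub hodd
  rw [show π ^ 2 / 6 - π ^ 2 / 12 = π ^ 2 / 12 by ring] at h
  exact h.congr_fun fun n => by ring

lemma hasSum_alternating_one_div_two_mul_add_one_sq :
    HasSum (fun n : ℕ => (-1 : ℝ) ^ n * (1 / (2 * ((n : ℝ) + 1) ^ 2))) (π ^ 2 / 24) := by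
  have h := hasSum_alternating_one_div_add_one_sq.mul_left (1 / 2)
  rw [show (1 : ℝ) / 2 * (π ^ 2 / 12) = π ^ 2 / 24 by ring] at h
  exact h.congr_fun fun n => by field_simp

lemma summable_one_div_two_mul_add_one_sq :
    Summable fun n : ℕ => 1 / (2 * ((n : ℝ) + 1) ^ 2) :=
  (hasSum_one_div_add_one_sq.summable.mul_left (1 / 2)).congr fun n => by field_simp

lemma hasSum_alternating_pow_succ_div_log_one_add {x : ℝ} (hx : |x| < 1) :
    HasSum (fun n : ℕ => (-1) ^ n * (x ^ (n + 1) / (n + 1))) (log (1 + x)) := by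
  have h := (hasSum_pow_div_log_of_abs_lt_one ((abs_neg x).trans_lt hx)).neg
  rw [sub_neg_eq_add, neg_neg] at h
  exact h.congr_fun fun n => by rw [neg_pow x, pow_succ (-1 : ℝ)]; ring

lemma hasSum_alternating_pow_succ_div_one_add {x : ℝ} (hx : |x| < 1) :
    HasSum (fun n : ℕ => (-1) ^ n * x ^ (n + 1)) (x / (1 + x)) := by
  have h := (hasSum_geometric_of_abs_lt_one ((abs_neg x).trans_lt hx)).mul_left x
  rw [sub_neg_eq_add] at h
  exact h.congr_fun fun n => by rw [neg_pow x]; ring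

lemma integral_pow_mul_exp_neg_mul_Ioi (k : ℕ) {c : ℝ} (hc : 0 < c) :
    ∫ x in Ioi (0 : ℝ), x ^ k * exp (-(c * x)) = k.factorial / c ^ (k + 1) := by
  have key := integral_rpow_mul_exp_neg_mul_Ioi (a := k + 1) (by positivity) hc
  simp_rw [add_sub_cancel_right, rpow_natCast, Gamma_nat_eq_factorial] at key
  rw [key, ← Nat.cast_succ, rpow_natCast, one_div_pow, one_div_mul_eq_div]

lemma integrableOn_pow_mul_exp_neg_mul_Ioi (k : ℕ) {c : ℝ} (hc : 0 < c) :
    IntegrableOn (fun x => x ^ k * exp (-(c * x))) (Ioi 0) :=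
  .of_integral_ne_zero (by rw [integral_pow_mul_exp_neg_mul_Ioi k hc]; positivity)

lemma hasSum_integral_of_alternating {α : Type*} [MeasurableSpace α] {μ : Measure α}
    {f : ℕ → α → ℝ} {F : α → ℝ} {a : ℕ → ℝ} (hf_nonneg : ∀ n, 0 ≤ᵐ[μ] f n)
    (hf_int : ∀ n, Integrable (f n) μ) (hf_integral : ∀ n, ∫ x, f n x ∂μ = a n)
    (ha : Summable a) (hF : ∀ᵐ x ∂μ, HasSum (fun n => (-1) ^ n * f n x) (F x)) :
    HasSum (fun n => (-1) ^ n * a n) (∫ x, F x ∂μ) := by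
  have hnorm : ∀ n, ∫ x, ‖(-1) ^ n * f n x‖ ∂μ = a n := fun n => by
    rw [← hf_integral n]
    refine integral_congr_ae ((hf_nonneg n).mono fun x hx => ?_)
    simp [abs_of_nonneg hx]
  have h := hasSum_integral_of_summable_integral_norm
    (fun n => (hf_int n).const_mul ((-1) ^ n)) (by simpa only [hnorm] using ha)
  rw [integral_congr_ae (hF.mono fun x hx => hx.tsum_eq)] at h
  exact h.congr_fun fun n => by rw [integral_const_mul, hf_integral]

lemma exp_neg_two_mul_pow (u : ℝ) (m : ℕ) : exp (-2 * u) ^ m = exp (-(2 * m * u)) := by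
  rw [← exp_nat_mul]; ring_nf

lemma abs_exp_neg_two_mul_lt_one {u : ℝ} (hu : 0 < u) : |exp (-2 * u)| < 1 := by
  rw [abs_of_pos (exp_pos _), exp_lt_one_iff]; linarith

lemma integral_log_one_add_exp_neg_two_mul :
    ∫ u in Ioi (0 : ℝ), log (1 + exp (-2 * u)) = π ^ 2 / 24 := by
  have hc (n : ℕ) : (0 : ℝ) < 2 * (n + 1) := by positivity
  refine (hasSum_integral_of_alternating (f := fun n u => exp (-(2 * (n + 1) * u)) / (n + 1))
    (fun n => .of_forall fun u => by positivity) (fun n => ?_) (fun n => ?_)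
    summable_one_div_two_mul_add_one_sq ?_).unique hasSum_alternating_one_div_two_mul_add_one_sq
  · simpa using (integrableOn_pow_mul_exp_neg_mul_Ioi 0 (hc n)).div_const ((n : ℝ) + 1)
  · have h := integral_pow_mul_exp_neg_mul_Ioi 0 (hc n)
    simp only [pow_zero, one_mul] at h
    rw [integral_div, h]
    field_simp
    norm_num
  · filter_upwards [ae_restrict_mem measurableSet_Ioi] with u hu
    refine (hasSum_alternating_pow_succ_div_log_one_add
      (abs_exp_neg_two_mul_lt_one hu)).congr_fun fun n => ?_
    rw [exp_neg_two_mul_pow]; push_cast; ring_nf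

lemma integral_mul_exp_neg_two_mul_div :
    ∫ u in Ioi (0 : ℝ), 2 * u * (exp (-2 * u) / (1 + exp (-2 * u))) = π ^ 2 / 24 := by
  have hc (n : ℕ) : (0 : ℝ) < 2 * (n + 1) := by positivity
  refine (hasSum_integral_of_alternating (f := fun n u => 2 * (u * exp (-(2 * (n + 1) * u))))
    (fun n => ?_) (fun n => ?_) (fun n => ?_)
    summable_one_div_two_mul_add_one_sq ?_).unique hasSum_alternating_one_div_two_mul_add_one_sq
  · filter_upwards [ae_restrict_mem measurableSet_Ioi] with u hu
    exact mul_nonneg zero_le_two (mul_nonneg (le_of_lt hu) (exp_pos _).le)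
  · simpa using (integrableOn_pow_mul_exp_neg_mul_Ioi 1 (hc n)).const_mul 2
  · have h := integral_pow_mul_exp_neg_mul_Ioi 1 (hc n)
    simp only [pow_one] at h
    rw [integral_const_mul, h]
    field_simp
    ring
  · filter_upwards [ae_restrict_mem measurableSet_Ioi] with u hu
    refine ((hasSum_alternating_pow_succ_div_one_add
      (abs_exp_neg_two_mul_lt_one hu)).mul_left (2 * u)).congr_fun fun n => ?_
    rw [exp_neg_two_mul_pow]; push_cast; ring_nf

/-- `∫_0^∞ φ(tanh u) du = 2 ∫_0^∞ log(1 + e^{-2u}) du = π²/12`, where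
`φ(x) = log 2 - (1/2)((1+x)log(1+x) + (1-x)log(1-x))`. -/
theorem stmt10 (φ : ℝ → ℝ)
    (hφ : ∀ x, φ x = Real.log 2 -
      (1 / 2) * ((1 + x) * Real.log (1 + x) + (1 - x) * Real.log (1 - x))) :
    (∫ u in Set.Ioi (0 : ℝ), φ (Real.tanh u))
      = 2 * ∫ u in Set.Ioi (0 : ℝ), Real.log (1 + Real.exp (-2 * u)) ∧
    (∫ u in Set.Ioi (0 : ℝ), φ (Real.tanh u)) = π ^ 2 / 12 := by
  have hlog := integral_log_one_add_exp_neg_two_mul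
  have hmul := integral_mul_exp_neg_two_mul_div
  have hsplit : ∫ u in Ioi (0 : ℝ), φ (tanh u) = π ^ 2 / 24 + π ^ 2 / 24 := by
    simp only [hφ, log_two_sub_entropy_tanh_eq]
    rw [integral_add (.of_integral_ne_zero (by rw [hlog]; positivity))
      (.of_integral_ne_zero (by rw [hmul]; positivity)), hlog, hmul]
  rw [hsplit, hlog]
  constructor <;> ring
end

section
/- Let f: ℝ → ℝ be 1-Lipschitz with f(x) ≥ |x| for all x and ∫_ℝ (f(x) - |x|) dx ≤ 1. Then f(x) ≤ √(x² + 2) for all x ∈ ℝ. -/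
open MeasureTheory Set

/-! Fix `x₀` and put `c = f x₀`. Being 1-Lipschitz, `f` lies above the roof `c - |x - x₀|`, so the
area between `f` and `|·|` is at least the area of `{(x, y) | |x| ≤ y ≤ c - |x - x₀|}`. This is a
rectangle turned by 45° with sides `(c - x₀) / √2` and `(c + x₀) / √2`, so its area
`(c ^ 2 - x₀ ^ 2) / 2` is at most 1, i.e. `c ^ 2 ≤ x₀ ^ 2 + 2`. -/

theorem hasDerivAt_mul_abs (x : ℝ) : HasDerivAt (fun t => t * |t|) (2 * |x|) x := by
  have hIci : ∀ y : ℝ, 0 ≤ y → HasDerivWithinAt (fun t => t * |t|) (2 * |y|) (Ici 0) y :=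
    fun y hy => ((hasDerivAt_pow 2 y).hasDerivWithinAt.congr
      (fun t ht => by simp [abs_of_nonneg (mem_Ici.mp ht), sq]) (by simp [abs_of_nonneg hy, sq])
      ).congr_deriv (by simp [abs_of_nonneg hy])
  have hIic : ∀ y : ℝ, y ≤ 0 → HasDerivWithinAt (fun t => t * |t|) (2 * |y|) (Iic 0) y :=
    fun y hy => ((hasDerivAt_pow 2 y).neg.hasDerivWithinAt.congr
      (fun t ht => by simp [abs_of_nonpos (mem_Iic.mp ht), sq]) (by simp [abs_of_nonpos hy, sq])
      ).congr_deriv (by simp [abs_of_nonpos hy])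
  rcases lt_trichotomy x 0 with hx | rfl | hx
  · exact (hIic x hx.le).hasDerivAt (Iic_mem_nhds hx)
  · simpa using (hIic 0 le_rfl).union (hIci 0 le_rfl)
  · exact (hIci x hx.le).hasDerivAt (Ici_mem_nhds hx)

theorem integral_abs_eq (a b : ℝ) : ∫ x in a..b, |x| = (b * |b| - a * |a|) / 2 := by
  rw [intervalIntegral.integral_eq_sub_of_hasDerivAt (f := fun x => x * |x| / 2)]
  · ring
  · intro x _
    simpa using (hasDerivAt_mul_abs x).div_const 2
  · exact continuous_abs.intervalIntegrable a b

theorem integral_const_sub_abs_sub_sub_abs {x₀ c : ℝ} (h : |x₀| ≤ c) :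
    ∫ x in (x₀ - c) / 2..(x₀ + c) / 2, (c - |x - x₀| - |x|) = (c ^ 2 - x₀ ^ 2) / 2 := by
  obtain ⟨h₁, h₂⟩ := abs_le.mp h
  rw [intervalIntegral.integral_sub, intervalIntegral.integral_sub, intervalIntegral.integral_const,
    intervalIntegral.integral_comp_sub_right (fun x => |x|), integral_abs_eq, integral_abs_eq,
    abs_of_nonneg (a := (x₀ + c) / 2 - x₀) (by linarith),
    abs_of_nonpos (a := (x₀ - c) / 2 - x₀) (by linarith),
    abs_of_nonneg (a := (x₀ + c) / 2) (by linarith),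
    abs_of_nonpos (a := (x₀ - c) / 2) (by linarith)]
  · rw [smul_eq_mul]; ring
  all_goals exact Continuous.intervalIntegrable (by fun_prop) _ _

theorem ofReal_integral_le_lintegral_ofReal {α : Type*} [MeasurableSpace α] {μ : Measure α}
    {f : α → ℝ} (hf : Integrable f μ) :
    ENNReal.ofReal (∫ x, f x ∂μ) ≤ ∫⁻ x, ENNReal.ofReal (f x) ∂μ := by
  rw [integral_eq_lintegral_pos_part_sub_lintegral_neg_part hf]
  exact (ENNReal.ofReal_le_ofReal (sub_le_self _ ENNReal.toReal_nonneg)).trans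
    ENNReal.ofReal_toReal_le

theorem ofReal_sq_sub_sq_div_two_le_lintegral {x₀ c : ℝ} (h : |x₀| ≤ c) :
    ENNReal.ofReal ((c ^ 2 - x₀ ^ 2) / 2) ≤ ∫⁻ x, ENNReal.ofReal (c - |x - x₀| - |x|) := by
  have hle : (x₀ - c) / 2 ≤ (x₀ + c) / 2 := by linarith [(abs_nonneg x₀).trans h]
  have hcont : Continuous fun x : ℝ => c - |x - x₀| - |x| := by fun_prop
  rw [← integral_const_sub_abs_sub_sub_abs h, intervalIntegral.integral_of_le hle]
  exact (ofReal_integral_le_lintegral_ofReal hcont.integrableOn_Ioc).trans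
    (setLIntegral_le_lintegral _ _)

/-- If `f : ℝ → ℝ` is 1-Lipschitz, `f(x) ≥ |x|` everywhere, and the area
between the graphs of `f` and `|·|` is at most 1, then `f(x) ≤ √(x² + 2)` for all `x`. -/
theorem stmt12 (f : ℝ → ℝ) (hlip : LipschitzWith 1 f) (hdom : ∀ x, |x| ≤ f x)
    (harea : ∫⁻ x : ℝ, ENNReal.ofReal (f x - |x|) ≤ 1) :
    ∀ x : ℝ, f x ≤ Real.sqrt (x ^ 2 + 2) := by
  intro x₀
  have hroof : ∀ x, f x₀ - |x - x₀| - |x| ≤ f x - |x| := fun x => by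
    have := hlip.dist_le_mul x x₀
    simp only [Real.dist_eq, NNReal.coe_one, one_mul] at this
    linarith [(abs_sub_le_iff.mp this).2]
  have hsq : (f x₀ ^ 2 - x₀ ^ 2) / 2 ≤ 1 := ENNReal.ofReal_le_one.mp <|
    (ofReal_sq_sub_sq_div_two_le_lintegral (hdom x₀)).trans <|
      (lintegral_mono fun x => ENNReal.ofReal_le_ofReal (hroof x)).trans harea
  exact Real.le_sqrt_of_sq_le (by linarith)
end

section
/- Let X be the set of 1-Lipschitz functions f: ℝ → ℝ with f(x) ≥ |x| for all x and ∫_ℝ (f(x) - |x|) dx ≤ 1, equipped with the topology of uniform convergence on compact sets. Then X is compact. -/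
open MeasureTheory Filter Topology Set
open scoped ENNReal

/-- Bound on `f 0` from the integral constraint. -/
lemma stmt13_bound {f : ℝ → ℝ} (hl : LipschitzWith 1 f) (hge : ∀ x, |x| ≤ f x)
    (hint : ∫⁻ x : ℝ, ENNReal.ofReal (f x - |x|) ≤ 1) : f 0 ≤ 2 := by
  set a := f 0 with ha
  have ha0 : 0 ≤ a := by simpa using hge 0
  by_contra hgt
  push_neg at hgt
  have key : ∀ x ∈ Icc (-(a/4)) (a/4), (a/2 : ℝ) ≤ f x - |x| := by
    intro x hx
    have hxabs : |x| ≤ a/4 := abs_le.2 ⟨by linarith [hx.1], hx.2⟩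
    have hd : |f x - f 0| ≤ |x| := by
      have := hl.dist_le_mul x 0
      simpa [Real.dist_eq] using this
    have h2 : f 0 - f x ≤ |x| := by linarith [(abs_le.1 hd).1]
    linarith
  have hind : (Icc (-(a/4)) (a/4)).indicator (fun _ => ENNReal.ofReal (a/2)) ≤
      fun x => ENNReal.ofReal (f x - |x|) := by
    intro x
    by_cases hx : x ∈ Icc (-(a/4)) (a/4)
    · simp only [indicator_of_mem hx]
      exact ENNReal.ofReal_le_ofReal (key x hx)
    · simp [indicator_of_notMem hx]
  have h1 : ENNReal.ofReal (a/2) * volume (Icc (-(a/4)) (a/4)) ≤ 1 := by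
    rw [← lintegral_indicator_const measurableSet_Icc]
    exact le_trans (lintegral_mono hind) hint
  rw [Real.volume_Icc, show (a/4 - -(a/4) : ℝ) = a/2 by ring] at h1
  have h2 : (1 : ℝ≥0∞) < ENNReal.ofReal (a/2) := by
    rw [show (1:ℝ≥0∞) = ENNReal.ofReal 1 by simp]
    exact (ENNReal.ofReal_lt_ofReal_iff_of_nonneg (by norm_num)).2 (by linarith)
  have h3 : ENNReal.ofReal (a/2) ≤ ENNReal.ofReal (a/2) * ENNReal.ofReal (a/2) := by
    conv_lhs => rw [← one_mul (ENNReal.ofReal (a/2))]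
    exact mul_le_mul_left h2.le _
  exact absurd h1 (not_le.2 (lt_of_lt_of_le h2 h3))

/-- The set `X` of 1-Lipschitz functions `f : ℝ → ℝ` with `f ≥ |·|` and
`∫ (f - |·|) ≤ 1`, viewed inside `C(ℝ, ℝ)` with the compact-open topology
(= uniform convergence on compact sets), is compact. -/
theorem stmt13 :
    IsCompact {f : C(ℝ, ℝ) | LipschitzWith 1 f ∧ (∀ x, |x| ≤ f x) ∧
      ∫⁻ x : ℝ, ENNReal.ofReal (f x - |x|) ≤ 1} := by
  set S : Set C(ℝ, ℝ) := {f : C(ℝ, ℝ) | LipschitzWith 1 f ∧ (∀ x, |x| ≤ f x) ∧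
      ∫⁻ x : ℝ, ENNReal.ofReal (f x - |x|) ≤ 1} with hS
  set K : Set C(ℝ, ℝ) := {f : C(ℝ, ℝ) | LipschitzWith 1 f ∧ f 0 ∈ Icc (0:ℝ) 2} with hK
  have hsub : S ⊆ K := by
    rintro f ⟨hl, hge, hint⟩
    exact ⟨hl, ⟨by simpa using hge 0, stmt13_bound hl hge hint⟩⟩
  -- K is compact via Arzelà–Ascoli
  have hKcomp : IsCompact K := by
    apply ArzelaAscoli.isCompact_of_equicontinuous
    · -- pointwise compactness
      have himg : ContinuousMap.toFun '' K =
          {f : ℝ → ℝ | (∀ x y, dist (f x) (f y) ≤ dist x y) ∧ f 0 ∈ Icc (0:ℝ) 2} := by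
        ext f
        constructor
        · rintro ⟨g, ⟨hl, h0⟩, rfl⟩
          refine ⟨fun x y => ?_, h0⟩
          simpa using hl.dist_le_mul x y
        · rintro ⟨hl, h0⟩
          have hlip : LipschitzWith 1 f :=
            LipschitzWith.of_dist_le_mul (fun x y => by simpa using hl x y)
          exact ⟨⟨f, hlip.continuous⟩, ⟨hlip, h0⟩, rfl⟩
      rw [himg]
      apply IsCompact.of_isClosed_subset
        (isCompact_univ_pi (fun x : ℝ => isCompact_Icc (a := -|x|) (b := 2 + |x|)))
      · have hcl : {f : ℝ → ℝ | ∀ x y, dist (f x) (f y) ≤ dist x y} =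
            ⋂ (x : ℝ) (y : ℝ), {f : ℝ → ℝ | dist (f x) (f y) ≤ dist x y} := by
          ext g; simp [mem_iInter]
        rw [setOf_and]
        refine IsClosed.inter ?_ (isClosed_Icc.preimage (continuous_apply 0))
        rw [hcl]
        exact isClosed_iInter fun x => isClosed_iInter fun y =>
          isClosed_le ((continuous_apply x).dist (continuous_apply y)) continuous_const
      · rintro f ⟨hl, h0⟩ x _
        have hd := hl x 0
        rw [Real.dist_eq, Real.dist_eq, sub_zero] at hd
        have h1 := (abs_le.1 hd).1
        have h2 := (abs_le.1 hd).2
        exact Set.mem_Icc.2 ⟨by linarith [h0.1], by linarith [h0.2]⟩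
    · -- equicontinuity
      have huec : UniformEquicontinuous (fun f : K => (f : ℝ → ℝ)) := by
        intro U hU
        rcases Metric.mem_uniformity_dist.1 hU with ⟨ε, hε, hball⟩
        apply Filter.eventually_of_mem (Metric.dist_mem_uniformity hε)
        rintro ⟨x, y⟩ hxy ⟨f, hf⟩
        exact hball (lt_of_le_of_lt (by simpa using hf.1.dist_le_mul x y) hxy)
      exact huec.equicontinuous
  -- S is closed: sequentially closed suffices since C(ℝ,ℝ) is first countable
  have hScl : IsClosed S := by
    apply IsSeqClosed.isClosed
    intro F f hF hconv
    have hpt : ∀ x, Tendsto (fun n => F n x) atTop (𝓝 (f x)) := fun x =>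
      ((continuous_eval_const x).tendsto f).comp hconv
    refine ⟨?_, ?_, ?_⟩
    · apply LipschitzWith.of_dist_le_mul
      intro x y
      have hlim : Tendsto (fun n => dist (F n x) (F n y)) atTop (𝓝 (dist (f x) (f y))) :=
        (hpt x).dist (hpt y)
      refine le_of_tendsto hlim (Filter.Eventually.of_forall fun n => ?_)
      simpa using (hF n).1.dist_le_mul x y
    · intro x
      exact le_of_tendsto_of_tendsto' tendsto_const_nhds (hpt x) fun n => (hF n).2.1 x
    · have hmeas : ∀ n, Measurable fun x : ℝ => ENNReal.ofReal (F n x - |x|) := fun n =>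
        ENNReal.measurable_ofReal.comp ((F n).continuous.measurable.sub measurable_norm)
      have hlim : ∀ x : ℝ, Tendsto (fun n => ENNReal.ofReal (F n x - |x|)) atTop
          (𝓝 (ENNReal.ofReal (f x - |x|))) := fun x =>
        (ENNReal.continuous_ofReal.tendsto _).comp ((hpt x).sub tendsto_const_nhds)
      calc ∫⁻ x : ℝ, ENNReal.ofReal (f x - |x|)
          = ∫⁻ x : ℝ, liminf (fun n => ENNReal.ofReal (F n x - |x|)) atTop :=
            lintegral_congr fun x => ((hlim x).liminf_eq).symm
        _ ≤ liminf (fun n => ∫⁻ x : ℝ, ENNReal.ofReal (F n x - |x|)) atTop :=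
            lintegral_liminf_le hmeas
        _ ≤ 1 := by
            apply liminf_le_of_le
            · isBoundedDefault
            · intro b hb
              rcases hb.exists with ⟨n, hn⟩
              exact le_trans hn (hF n).2.2
  exact hKcomp.of_isClosed_subset hScl hsub
end

section
/- Let X be the set of 1-Lipschitz functions f: ℝ → ℝ with f ≥ |·| and ∫_ℝ (f(x)-|x|) dx ≤ 1. On X, uniform convergence on compact sets implies uniform convergence on all of ℝ: if f_n, f ∈ X and f_n → f uniformly on every compact set, then sup_{x∈ℝ} |f_n(x) - f(x)| → 0. -/
open MeasureTheory

/-- Tail bound: for `h` in the class, `(h x₀ - |x₀|) * |x₀| ≤ 1`. -/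
lemma tail_bound (h : ℝ → ℝ) (hl : LipschitzWith 1 h) (habs : ∀ x, |x| ≤ h x)
    (hint : ∫⁻ x : ℝ, ENNReal.ofReal (h x - |x|) ≤ 1) (x₀ : ℝ) :
    (h x₀ - |x₀|) * |x₀| ≤ 1 := by
  set c := h x₀ - |x₀| with hc
  have hc0 : 0 ≤ c := sub_nonneg.mpr (habs x₀)
  -- pointwise lower bound on uIcc 0 x₀
  have key : ∀ x ∈ Set.uIcc (0:ℝ) x₀, c ≤ h x - |x| := by
    intro x hx
    have hd : |h x₀ - h x| ≤ |x₀ - x| := by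
      have := hl.dist_le_mul x₀ x
      simpa [Real.dist_eq] using this
    have habs' : |x₀ - x| + |x| = |x₀| := by
      rw [Set.mem_uIcc] at hx
      rcases hx with ⟨h1, h2⟩ | ⟨h1, h2⟩
      · rw [abs_of_nonneg (by linarith), abs_of_nonneg h1,
          abs_of_nonneg (by linarith)]
        ring
      · rw [abs_of_nonpos (by linarith), abs_of_nonpos h2,
          abs_of_nonpos (by linarith)]
        ring
    have := abs_le.mp hd
    linarith [habs x]
  have hmeas : Measurable fun x : ℝ => ENNReal.ofReal (h x - |x|) :=
    (ENNReal.measurable_ofReal.comp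
      ((hl.continuous.measurable.sub (continuous_abs.measurable))))
  have h1 : ENNReal.ofReal c * ENNReal.ofReal |x₀|
      ≤ ∫⁻ x : ℝ, ENNReal.ofReal (h x - |x|) := by
    calc ENNReal.ofReal c * ENNReal.ofReal |x₀|
        = ∫⁻ _ in Set.uIcc (0:ℝ) x₀, ENNReal.ofReal c := by
          rw [setLIntegral_const, Real.volume_interval]
          simp
      _ ≤ ∫⁻ x in Set.uIcc (0:ℝ) x₀, ENNReal.ofReal (h x - |x|) :=
          setLIntegral_mono hmeas fun x hx => ENNReal.ofReal_le_ofReal (key x hx)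
      _ ≤ ∫⁻ x : ℝ, ENNReal.ofReal (h x - |x|) :=
          setLIntegral_le_lintegral _ _
  have h2 : ENNReal.ofReal (c * |x₀|) ≤ 1 := by
    rw [ENNReal.ofReal_mul hc0]
    exact h1.trans hint
  exact ENNReal.ofReal_le_one.mp h2

/-- Within the class `X` of 1-Lipschitz functions `f ≥ |·|` with
`∫ (f - |·|) ≤ 1`, uniform convergence on every compact set implies uniform
convergence on all of `ℝ`. -/
theorem stmt14 (f : ℕ → ℝ → ℝ) (g : ℝ → ℝ)
    (hf : ∀ n, LipschitzWith 1 (f n) ∧ (∀ x, |x| ≤ f n x) ∧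
      ∫⁻ x : ℝ, ENNReal.ofReal (f n x - |x|) ≤ 1)
    (hg : LipschitzWith 1 g ∧ (∀ x, |x| ≤ g x) ∧
      ∫⁻ x : ℝ, ENNReal.ofReal (g x - |x|) ≤ 1)
    (hconv : ∀ K : Set ℝ, IsCompact K → TendstoUniformlyOn f g Filter.atTop K) :
    TendstoUniformly f g Filter.atTop := by
  rw [Metric.tendstoUniformly_iff]
  intro ε hε
  set R : ℝ := max 1 (4 / ε) with hR
  have hR1 : (1:ℝ) ≤ R := le_max_left _ _
  have hRε : 4 / ε ≤ R := le_max_right _ _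
  have hcpt := (hconv (Set.Icc (-R) R) isCompact_Icc)
  rw [Metric.tendstoUniformlyOn_iff] at hcpt
  filter_upwards [hcpt ε hε] with n hn x
  by_cases hx : |x| ≤ R
  · exact hn x (abs_le.mp hx)
  · push_neg at hx
    have hxpos : (0:ℝ) < |x| := lt_of_lt_of_le (by linarith) hx.le
    have hg1 : g x - |x| ≤ 1 / |x| := by
      have := tail_bound g hg.1 hg.2.1 hg.2.2 x
      rw [le_div_iff₀ hxpos]; exact this
    have hf1 : f n x - |x| ≤ 1 / |x| := by
      have := tail_bound (f n) (hf n).1 (hf n).2.1 (hf n).2.2 x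
      rw [le_div_iff₀ hxpos]; exact this
    have hεpos : 0 < ε := hε
    have hRpos : (0:ℝ) < R := by linarith
    have hdivR : 1 / |x| ≤ 1 / R := one_div_le_one_div_of_le hRpos hx.le
    have hdivε : 1 / R ≤ ε / 4 := by
      rw [div_le_div_iff₀ hRpos (by norm_num : (0:ℝ) < 4)]
      calc (1:ℝ) * 4 = 4 := by ring
        _ = ε * (4 / ε) := by field_simp
        _ ≤ ε * R := by nlinarith
    have hgb : |x| ≤ g x := hg.2.1 x
    have hfb : |x| ≤ f n x := (hf n).2.1 x
    rw [Real.dist_eq]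
    have : |g x - f n x| ≤ (g x - |x|) + (f n x - |x|) := by
      rw [abs_le]; constructor <;> linarith
    linarith
end

section
/- Let f: ℝ → ℝ be 1-Lipschitz with f(x) ≥ |x| and ∫_ℝ (f(x)-|x|) dx ≤ 1. Then Σ_{n≥0} (f(n) - n) ≤ 3 and Σ_{n≥1} n·(1 - f(n) + f(n-1)) ≤ 3. -/
open MeasureTheory ENNReal

/-- If `f : ℝ → ℝ` is 1-Lipschitz, `f ≥ |·|`, and `∫ (f - |·|) ≤ 1`,
then `Σ_{n≥0} (f(n) - n) ≤ 3` and `Σ_{n≥1} n·(1 - f(n) + f(n-1)) ≤ 3`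
(all terms are nonnegative; sums taken in `ℝ≥0∞`). -/
theorem stmt15 (f : ℝ → ℝ) (hlip : LipschitzWith 1 f) (hdom : ∀ x, |x| ≤ f x)
    (harea : ∫⁻ x : ℝ, ENNReal.ofReal (f x - |x|) ≤ 1) :
    (∑' n : ℕ, ENNReal.ofReal (f n - n)) ≤ 3 ∧
    (∑' n : ℕ, ((n : ℝ≥0∞) + 1) * ENNReal.ofReal (1 - f (n + 1) + f n)) ≤ 3 := by
  -- basic facts
  have hlip' : ∀ x y : ℝ, x ≤ y → f y - y ≤ f x - x := by
    intro x y hxy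
    have h := hlip.dist_le_mul y x
    rw [Real.dist_eq, Real.dist_eq] at h
    norm_num at h
    rw [abs_of_nonneg (by linarith : (0:ℝ) ≤ y - x)] at h
    linarith [(abs_le.mp h).2]
  have hnn : ∀ n : ℕ, 0 ≤ f n - n := by
    intro n
    have := hdom n
    rw [abs_of_nonneg (Nat.cast_nonneg n)] at this
    linarith
  have hf0 : 0 ≤ f 0 := by have := hdom 0; simpa using this
  -- Step A : f 0 ≤ 2 via triangle integral
  set c : ℝ := f 0 / 2 with hc
  have hcnn : 0 ≤ c := by positivity
  have htri_int : ∫ x in Set.Ioc (0:ℝ) c, (f 0 - 2*x) = (f 0)^2 / 4 := by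
    rw [← intervalIntegral.integral_of_le hcnn]
    have h1 : IntervalIntegrable (fun _ : ℝ => f 0) volume 0 c := intervalIntegrable_const
    have h2 : IntervalIntegrable (fun x : ℝ => 2*x) volume 0 c :=
      (continuous_const.mul continuous_id).intervalIntegrable 0 c
    rw [intervalIntegral.integral_sub h1 h2, intervalIntegral.integral_const,
      intervalIntegral.integral_const_mul, integral_id]
    simp [hc]
    ring
  have htri_intg : IntegrableOn (fun x : ℝ => f 0 - 2*x) (Set.Ioc 0 c) volume := by
    apply Continuous.integrableOn_Ioc
    continuity
  have htri_nn : 0 ≤ᵐ[volume.restrict (Set.Ioc (0:ℝ) c)] fun x => f 0 - 2*x := by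
    refine (ae_restrict_iff' measurableSet_Ioc).mpr (ae_of_all _ ?_)
    intro x hx
    have := hx.2
    simp only [hc] at this
    simp only [Pi.zero_apply]
    linarith
  have hA1 : ENNReal.ofReal ((f 0)^2/4)
      = ∫⁻ x in Set.Ioc (0:ℝ) c, ENNReal.ofReal (f 0 - 2*x) := by
    rw [← htri_int]
    exact ofReal_integral_eq_lintegral_ofReal htri_intg htri_nn
  have hA2 : (∫⁻ x in Set.Ioc (0:ℝ) c, ENNReal.ofReal (f 0 - 2*x))
      ≤ ∫⁻ x in Set.Ioc (0:ℝ) c, ENNReal.ofReal (f x - |x|) := by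
    refine setLIntegral_mono' measurableSet_Ioc ?_
    intro x hx
    apply ENNReal.ofReal_le_ofReal
    have hx0 : 0 ≤ x := hx.1.le
    rw [abs_of_nonneg hx0]
    have h := hlip.dist_le_mul x 0
    simp only [Real.dist_eq, sub_zero] at h
    norm_num at h
    rw [abs_of_nonneg hx0] at h
    linarith [(abs_le.mp h).1]
  have hA3 : ENNReal.ofReal ((f 0)^2/4) ≤ 1 := by
    calc ENNReal.ofReal ((f 0)^2/4)
        ≤ ∫⁻ x in Set.Ioc (0:ℝ) c, ENNReal.ofReal (f x - |x|) := hA1 ▸ hA2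
      _ ≤ ∫⁻ x : ℝ, ENNReal.ofReal (f x - |x|) := setLIntegral_le_lintegral _ _
      _ ≤ 1 := harea
  have hf0le2 : f 0 ≤ 2 := by
    have h4 : (f 0)^2/4 ≤ 1 := by
      have := ENNReal.ofReal_le_one.mp hA3
      linarith [this]
    nlinarith
  -- Step B : Σ_{n≥1} a_n ≤ 1
  have hkey : ∀ n : ℕ, ENNReal.ofReal (f (n+1:ℕ) - ((n+1:ℕ):ℝ))
      ≤ ∫⁻ x in Set.Ioc (n:ℝ) (n+1), ENNReal.ofReal (f x - |x|) := by
    intro n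
    have hv : ENNReal.ofReal (f (n+1:ℕ) - ((n+1:ℕ):ℝ))
        = ∫⁻ _x in Set.Ioc (n:ℝ) (n+1), ENNReal.ofReal (f (n+1:ℕ) - ((n+1:ℕ):ℝ)) := by
      rw [setLIntegral_const, Real.volume_Ioc]
      simp
    rw [hv]
    refine setLIntegral_mono' measurableSet_Ioc ?_
    intro x hx
    apply ENNReal.ofReal_le_ofReal
    have hx0 : 0 ≤ x := le_trans (Nat.cast_nonneg n) hx.1.le
    rw [abs_of_nonneg hx0]
    have : f (↑n+1) - (↑n+1) ≤ f x - x := hlip' x (↑n+1) hx.2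
    push_cast
    linarith
  have hdisj : Pairwise (Function.onFun Disjoint fun n : ℕ => Set.Ioc (n:ℝ) (n+1)) := by
    intro m n hmn
    simp only [Function.onFun, Set.Ioc_disjoint_Ioc]
    rcases lt_or_gt_of_ne hmn with h | h
    · have : (m:ℝ)+1 ≤ n := by exact_mod_cast Nat.succ_le_of_lt h
      exact le_trans (min_le_left _ _) (le_trans this (le_max_right _ _))
    · have : (n:ℝ)+1 ≤ m := by exact_mod_cast Nat.succ_le_of_lt h
      exact le_trans (min_le_right _ _) (le_trans this (le_max_left _ _))
  have hsumB : (∑' n : ℕ, ENNReal.ofReal (f (n+1:ℕ) - ((n+1:ℕ):ℝ))) ≤ 1 := by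
    calc (∑' n : ℕ, ENNReal.ofReal (f (n+1:ℕ) - ((n+1:ℕ):ℝ)))
        ≤ ∑' n : ℕ, ∫⁻ x in Set.Ioc (n:ℝ) (n+1), ENNReal.ofReal (f x - |x|) :=
          ENNReal.tsum_le_tsum hkey
      _ = ∫⁻ x in ⋃ n : ℕ, Set.Ioc (n:ℝ) (n+1), ENNReal.ofReal (f x - |x|) :=
          (lintegral_iUnion (fun _ => measurableSet_Ioc) hdisj _).symm
      _ ≤ ∫⁻ x : ℝ, ENNReal.ofReal (f x - |x|) := setLIntegral_le_lintegral _ _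
      _ ≤ 1 := harea
  -- first sum
  have hfirst : (∑' n : ℕ, ENNReal.ofReal (f n - n)) ≤ 3 := by
    have hsplit : (∑' n : ℕ, ENNReal.ofReal (f n - n))
        = ENNReal.ofReal (f ((0:ℕ):ℝ) - ((0:ℕ):ℝ)) + ∑' n : ℕ, ENNReal.ofReal (f (n+1:ℕ) - ((n+1:ℕ):ℝ)) :=
      tsum_eq_zero_add' (f := fun n : ℕ => ENNReal.ofReal (f n - n)) ENNReal.summable
    rw [hsplit]
    have h1 : ENNReal.ofReal (f ((0:ℕ):ℝ) - ((0:ℕ):ℝ)) ≤ 2 := by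
      simp only [Nat.cast_zero, sub_zero]
      calc ENNReal.ofReal (f 0) ≤ ENNReal.ofReal 2 := ENNReal.ofReal_le_ofReal hf0le2
        _ = 2 := by norm_num
    calc ENNReal.ofReal (f ((0:ℕ):ℝ) - ((0:ℕ):ℝ)) + ∑' n : ℕ, ENNReal.ofReal (f (n+1:ℕ) - ((n+1:ℕ):ℝ))
        ≤ 2 + 1 := add_le_add h1 hsumB
      _ = 3 := by norm_num
  refine ⟨hfirst, ?_⟩
  -- second sum: telescoping
  have htel : ∀ N : ℕ, (∑ n ∈ Finset.range N, ((n:ℝ)+1) * (1 - f (n+1) + f n))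
      = (∑ n ∈ Finset.range N, (f n - n)) - N * (f N - N) := by
    intro N
    induction N with
    | zero => simp
    | succ N ih =>
      rw [Finset.sum_range_succ, Finset.sum_range_succ, ih]
      push_cast
      ring
  have hterm : ∀ n : ℕ, ((n : ℝ≥0∞) + 1) * ENNReal.ofReal (1 - f (n + 1) + f n)
      = ENNReal.ofReal (((n:ℝ)+1) * (1 - f (n+1) + f n)) := by
    intro n
    rw [ENNReal.ofReal_mul (by positivity)]
    congr 1
    rw [ENNReal.ofReal_add (Nat.cast_nonneg n) zero_le_one]
    simp
  rw [ENNReal.tsum_eq_iSup_sum]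
  refine iSup_le fun s => ?_
  obtain ⟨N, hN⟩ := s.exists_nat_subset_range
  have hmono_s : (∑ n ∈ s, ((n : ℝ≥0∞) + 1) * ENNReal.ofReal (1 - f (n + 1) + f n))
      ≤ ∑ n ∈ Finset.range N, ((n : ℝ≥0∞) + 1) * ENNReal.ofReal (1 - f (n + 1) + f n) :=
    Finset.sum_le_sum_of_subset hN
  refine le_trans hmono_s ?_
  have hbnn : ∀ n : ℕ, 0 ≤ 1 - f (n+1) + f n := by
    intro n
    have := hlip' (n:ℝ) ((n:ℝ)+1) (by linarith)
    linarith
  calc (∑ n ∈ Finset.range N, ((n : ℝ≥0∞) + 1) * ENNReal.ofReal (1 - f (n + 1) + f n))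
      = ∑ n ∈ Finset.range N, ENNReal.ofReal (((n:ℝ)+1) * (1 - f (n+1) + f n)) := by
        exact Finset.sum_congr rfl fun n _ => hterm n
    _ = ENNReal.ofReal (∑ n ∈ Finset.range N, ((n:ℝ)+1) * (1 - f (n+1) + f n)) := by
        rw [ENNReal.ofReal_sum_of_nonneg]
        intro n _
        have := hbnn n
        positivity
    _ ≤ ENNReal.ofReal (∑ n ∈ Finset.range N, (f n - n)) := by
        apply ENNReal.ofReal_le_ofReal
        rw [htel N]
        have := hnn N
        nlinarith [Nat.cast_nonneg (α := ℝ) N, hnn N]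
    _ = ∑ n ∈ Finset.range N, ENNReal.ofReal (f n - n) := by
        rw [ENNReal.ofReal_sum_of_nonneg (fun n _ => hnn n)]
    _ ≤ ∑' n : ℕ, ENNReal.ofReal (f n - n) := ENNReal.sum_le_tsum _
    _ ≤ 3 := hfirst
end

section
/- Tail tightness: Define φ(x) = log 2 - (1/2)((1+x)log(1+x)+(1-x)log(1-x)). For every ε > 0 there exists A > 0 such that for every 1-Lipschitz f: ℝ → ℝ with f ≥ |·| and ∫_ℝ (f(x)-|x|)dx ≤ 1, one has ∫_{ℝ \ [-A,A]} φ(f'(x)) dx < ε. In particular ∫_ℝ φ∘f' converges for every such f. -/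
open MeasureTheory Set Real
open scoped ENNReal

/-!
With `u = 1 - f' ∈ [0, 2]` we have `φ(f') = H(u / 2)` for the binary entropy `H`, and
`H(u / 2) ≤ 5 u^{3/4}`. Since `x ↦ f x - x` is antitone and nonnegative on `(0, ∞)` with area
at most `1`, `f a - a ≤ 1 / a`, so by the fundamental theorem of calculus for the Lipschitz
function `f`, `∫_a^c u ≤ 1 / a` for `0 < a ≤ c`. On a block `[b², 4b²)` the pointwise Young bound
`u^{3/4} ≤ b⁻³ + u b` then gives `∫ φ(f') ≤ 20 / b`; the blocks `b = 2^k b₀` cover `(b₀², ∞)` and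
the bounds sum geometrically to `40 / b₀`. The left tail is the right tail of `x ↦ f (-x)`, as `φ`
is even.
-/

lemma binEntropy_one_sub_div_two (t : ℝ) :
    binEntropy ((1 - t) / 2) =
      log 2 - 1 / 2 * ((1 + t) * log (1 + t) + (1 - t) * log (1 - t)) := by
  have h : 1 - (1 - t) / 2 = (1 + t) * 2⁻¹ := by ring
  rw [binEntropy_eq_negMulLog_add_negMulLog_one_sub, h, div_eq_mul_inv, negMulLog_mul,
    negMulLog_mul]
  simp only [negMulLog, log_inv]
  ring

lemma binEntropy_one_add_div_two (t : ℝ) :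
    binEntropy ((1 + t) / 2) = binEntropy ((1 - t) / 2) := by
  rw [← binEntropy_one_sub]; ring_nf

lemma negMulLog_le_four_mul_rpow {p : ℝ} (hp0 : 0 ≤ p) (hp1 : p ≤ 1) :
    negMulLog p ≤ 4 * p ^ (3 / 4 : ℝ) := by
  rcases hp0.eq_or_lt with rfl | hp
  · simp
  have hlog := abs_log_mul_self_rpow_lt p (1 / 4) hp hp1 (by norm_num)
  have hsplit : negMulLog p = -(log p * p ^ (1 / 4 : ℝ)) * p ^ (3 / 4 : ℝ) := by
    rw [neg_mul, mul_assoc, ← rpow_add hp]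
    norm_num [negMulLog]
    ring
  rw [hsplit]
  gcongr
  exact (neg_le_abs _).trans (by linarith)

lemma binEntropy_div_two_le_five_mul_rpow {u : ℝ} (hu0 : 0 ≤ u) (hu2 : u ≤ 2) :
    binEntropy (u / 2) ≤ 5 * u ^ (3 / 4 : ℝ) := by
  have hp0 : 0 ≤ u / 2 := by positivity
  have hp1 : u / 2 ≤ 1 := by linarith
  have h1 := negMulLog_le_four_mul_rpow hp0 hp1
  have h2 := negMulLog_le_one_sub_self (sub_nonneg.2 hp1)
  have h3 := self_le_rpow_of_le_one hp0 hp1 (by norm_num : (3 / 4 : ℝ) ≤ 1)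
  have h4 : (u / 2) ^ (3 / 4 : ℝ) ≤ u ^ (3 / 4 : ℝ) := by gcongr; linarith
  rw [binEntropy_eq_negMulLog_add_negMulLog_one_sub]
  linarith

lemma rpow_le_rpow_add_mul_rpow_sub_one {u l r : ℝ} (hu : 0 ≤ u) (hl : 0 < l) (hr0 : 0 ≤ r)
    (hr1 : r ≤ 1) : u ^ r ≤ l ^ r + u * l ^ (r - 1) := by
  rcases le_or_gt u l with h | h
  · have : 0 ≤ u * l ^ (r - 1) := by positivity
    linarith [rpow_le_rpow hu h hr0]
  · have hu0 : 0 < u := hl.trans h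
    calc u ^ r = u * u ^ (r - 1) := by
          conv_lhs => rw [← add_sub_cancel 1 r, rpow_add hu0, rpow_one]
      _ ≤ u * l ^ (r - 1) :=
          mul_le_mul_of_nonneg_left (rpow_le_rpow_of_nonpos hl h.le (by linarith)) hu
      _ ≤ l ^ r + u * l ^ (r - 1) := le_add_of_nonneg_left (by positivity)

lemma rpow_three_div_four_le {u b : ℝ} (hu : 0 ≤ u) (hb : 0 < b) :
    u ^ (3 / 4 : ℝ) ≤ b⁻¹ ^ 3 + u * b := by
  have hl : (b⁻¹ ^ 4 : ℝ) = b ^ (-4 : ℝ) := by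
    rw [rpow_neg hb.le, inv_pow]; norm_cast
  have h := rpow_le_rpow_add_mul_rpow_sub_one hu (pow_pos (inv_pos.2 hb) 4) (r := 3 / 4)
    (by norm_num) (by norm_num)
  rw [hl, ← rpow_mul hb.le, ← rpow_mul hb.le] at h
  convert h using 3
  · rw [show (-4 : ℝ) * (3 / 4) = -(3 : ℕ) by norm_num, rpow_neg hb.le, rpow_natCast, inv_pow]
  · norm_num

lemma Ioi_subset_iUnion_Ico_mul_pow {a r : ℝ} (ha : 0 < a) (hr : 1 < r) :
    Ioi a ⊆ ⋃ k : ℕ, Ico (a * r ^ k) (a * r ^ (k + 1)) := by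
  intro x hx
  obtain ⟨k, hk⟩ := exists_nat_pow_near ((one_le_div ha).2 (le_of_lt hx)) hr
  rw [le_div_iff₀ ha, div_lt_iff₀ ha] at hk
  exact mem_iUnion.2 ⟨k, by rw [mul_comm a, mul_comm a]; exact hk⟩

lemma setLIntegral_Iio_neg_eq (g : ℝ → ℝ≥0∞) (a : ℝ) :
    ∫⁻ x in Iio (-a), g x = ∫⁻ x in Ioi a, g (-x) := by
  rw [(Measure.measurePreserving_neg volume).setLIntegral_comp_emb
    (Homeomorph.neg ℝ).measurableEmbedding, image_neg_Ioi]

lemma LipschitzWith.sub_id_antitone {f : ℝ → ℝ} (hf : LipschitzWith 1 f) :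
    Antitone fun x => f x - x := by
  intro x y hxy
  have := hf.le_add_mul y x
  rw [Real.dist_eq, abs_of_nonneg (sub_nonneg.2 hxy)] at this
  simp only [NNReal.coe_one, one_mul] at this
  linarith

lemma LipschitzWith.abs_deriv_le_one {f : ℝ → ℝ} (hf : LipschitzWith 1 f) (x : ℝ) :
    |deriv f x| ≤ 1 := by
  simpa using norm_deriv_le_of_lipschitz (x₀ := x) hf

lemma LipschitzWith.binEntropy_deriv_nonneg {f : ℝ → ℝ} (hf : LipschitzWith 1 f) (x : ℝ) :
    0 ≤ binEntropy ((1 - deriv f x) / 2) := by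
  obtain ⟨h1, h2⟩ := abs_le.1 (hf.abs_deriv_le_one x)
  exact binEntropy_nonneg (by linarith) (by linarith)

structure IsAbsMajorant (f : ℝ → ℝ) : Prop where
  lipschitz : LipschitzWith 1 f
  abs_le_apply : ∀ x, |x| ≤ f x
  lintegral_le : ∫⁻ x, ENNReal.ofReal (f x - |x|) ≤ 1

namespace IsAbsMajorant

variable {f : ℝ → ℝ}

lemma comp_neg (hf : IsAbsMajorant f) : IsAbsMajorant fun x => f (-x) where
  lipschitz := by
    have := hf.lipschitz.comp LipschitzWith.id.neg
    rwa [mul_one] at this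
  abs_le_apply x := by simpa using hf.abs_le_apply (-x)
  lintegral_le := by
    simpa using (lintegral_neg_eq_self (fun x => ENNReal.ofReal (f x - |x|)) (μ := volume)).trans_le
      hf.lintegral_le

lemma sub_le_inv (hf : IsAbsMajorant f) {a : ℝ} (ha : 0 < a) : f a - a ≤ a⁻¹ := by
  have hfa : 0 ≤ f a - a := by linarith [hf.abs_le_apply a, le_abs_self a]
  have hmass : ENNReal.ofReal (f a - a) * volume (Ioc 0 a) ≤ 1 := calc
    ENNReal.ofReal (f a - a) * volume (Ioc 0 a)
        ≤ ∫⁻ x in Ioc 0 a, ENNReal.ofReal (f x - |x|) := by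
      rw [← setLIntegral_const]
      refine setLIntegral_mono' measurableSet_Ioc fun x hx => ENNReal.ofReal_le_ofReal ?_
      rw [abs_of_pos hx.1]
      exact hf.lipschitz.sub_id_antitone hx.2
    _ ≤ 1 := (setLIntegral_le_lintegral _ _).trans hf.lintegral_le
  rw [Real.volume_Ioc, sub_zero, ← ENNReal.ofReal_mul hfa, ENNReal.ofReal_le_one] at hmass
  rwa [← one_div, le_div_iff₀ ha]

lemma lintegral_one_sub_deriv_le (hf : IsAbsMajorant f) {a c : ℝ} (ha : 0 < a) (hac : a ≤ c) :
    ∫⁻ x in Ico a c, ENNReal.ofReal (1 - deriv f x) ≤ ENNReal.ofReal a⁻¹ := by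
  have hfac := (hf.lipschitz.lipschitzOnWith (s := uIcc a c)).absolutelyContinuousOnInterval
  have hint : IntegrableOn (fun x => 1 - deriv f x) (Ioc a c) :=
    (continuous_const.integrableOn_Ioc).sub ((intervalIntegrable_iff_integrableOn_Ioc_of_le hac).1
      hfac.intervalIntegrable_deriv)
  have hnn : 0 ≤ᵐ[volume.restrict (Ioc a c)] fun x => 1 - deriv f x :=
    ae_of_all _ fun x => sub_nonneg.2 (abs_le.1 (hf.lipschitz.abs_deriv_le_one x)).2
  rw [setLIntegral_congr Ico_ae_eq_Ioc, ← ofReal_integral_eq_lintegral_ofReal hint hnn,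
    ← intervalIntegral.integral_of_le hac]
  refine ENNReal.ofReal_le_ofReal ?_
  rw [intervalIntegral.integral_sub intervalIntegrable_const hfac.intervalIntegrable_deriv,
    hfac.integral_deriv_eq_sub, intervalIntegral.integral_const, smul_eq_mul, mul_one]
  linarith [hf.sub_le_inv ha, hf.abs_le_apply c, le_abs_self c]

lemma lintegral_binEntropy_deriv_Ico_le (hf : IsAbsMajorant f) {b : ℝ} (hb : 0 < b) :
    ∫⁻ x in Ico (b ^ 2) (4 * b ^ 2), ENNReal.ofReal (binEntropy ((1 - deriv f x) / 2))
      ≤ ENNReal.ofReal (20 / b) := by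
  have hpt : ∀ x, ENNReal.ofReal (binEntropy ((1 - deriv f x) / 2)) ≤
      ENNReal.ofReal (5 * b⁻¹ ^ 3) + ENNReal.ofReal (5 * b) * ENNReal.ofReal (1 - deriv f x) := by
    intro x
    obtain ⟨h1, h2⟩ := abs_le.1 (hf.lipschitz.abs_deriv_le_one x)
    have hent := binEntropy_div_two_le_five_mul_rpow (u := 1 - deriv f x) (by linarith)
      (by linarith)
    have hyoung := rpow_three_div_four_le (u := 1 - deriv f x) (by linarith) hb
    rw [← ENNReal.ofReal_mul (by positivity), ← ENNReal.ofReal_add (by positivity)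
      (mul_nonneg (by positivity) (by linarith))]
    exact ENNReal.ofReal_le_ofReal (by nlinarith)
  calc _ ≤ ∫⁻ x in Ico (b ^ 2) (4 * b ^ 2),
          (ENNReal.ofReal (5 * b⁻¹ ^ 3) +
            ENNReal.ofReal (5 * b) * ENNReal.ofReal (1 - deriv f x)) :=
        lintegral_mono hpt
    _ = ENNReal.ofReal (5 * b⁻¹ ^ 3) * volume (Ico (b ^ 2) (4 * b ^ 2)) + ENNReal.ofReal (5 * b) *
          ∫⁻ x in Ico (b ^ 2) (4 * b ^ 2), ENNReal.ofReal (1 - deriv f x) := by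
        rw [lintegral_add_left measurable_const, setLIntegral_const,
          lintegral_const_mul' _ _ ENNReal.ofReal_ne_top]
    _ ≤ ENNReal.ofReal (5 * b⁻¹ ^ 3) * ENNReal.ofReal (3 * b ^ 2) +
          ENNReal.ofReal (5 * b) * ENNReal.ofReal (b ^ 2)⁻¹ := by
        rw [Real.volume_Ico, show 4 * b ^ 2 - b ^ 2 = 3 * b ^ 2 by ring]
        gcongr
        exact hf.lintegral_one_sub_deriv_le (by positivity) (by nlinarith)
    _ = ENNReal.ofReal (20 / b) := by
        rw [← ENNReal.ofReal_mul (by positivity), ← ENNReal.ofReal_mul (by positivity),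
          ← ENNReal.ofReal_add (by positivity) (by positivity)]
        congr 1
        field_simp
        ring

lemma lintegral_binEntropy_deriv_Ioi_le (hf : IsAbsMajorant f) {b : ℝ} (hb : 0 < b) :
    ∫⁻ x in Ioi (b ^ 2), ENNReal.ofReal (binEntropy ((1 - deriv f x) / 2))
      ≤ ENNReal.ofReal (40 / b) := calc
  _ ≤ ∫⁻ x in ⋃ k : ℕ, Ico (b ^ 2 * 4 ^ k) (b ^ 2 * 4 ^ (k + 1)),
        ENNReal.ofReal (binEntropy ((1 - deriv f x) / 2)) :=
      lintegral_mono_set (Ioi_subset_iUnion_Ico_mul_pow (by positivity) (by norm_num))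
  _ ≤ ∑' k : ℕ, ∫⁻ x in Ico (b ^ 2 * 4 ^ k) (b ^ 2 * 4 ^ (k + 1)),
        ENNReal.ofReal (binEntropy ((1 - deriv f x) / 2)) :=
      lintegral_iUnion_le _ _
  _ ≤ ∑' k : ℕ, ENNReal.ofReal (20 / b) * 2⁻¹ ^ k := by
      refine ENNReal.tsum_le_tsum fun k => ?_
      have hblock := hf.lintegral_binEntropy_deriv_Ico_le (b := b * 2 ^ k) (by positivity)
      rw [show (b * 2 ^ k) ^ 2 = b ^ 2 * 4 ^ k by rw [mul_pow, ← pow_mul, pow_mul']; norm_num,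
        show 4 * (b ^ 2 * 4 ^ k) = b ^ 2 * 4 ^ (k + 1) by ring] at hblock
      refine hblock.trans_eq ?_
      rw [show 20 / (b * 2 ^ k) = 20 / b * 2⁻¹ ^ k by rw [inv_pow]; field_simp,
        ENNReal.ofReal_mul (by positivity), ENNReal.ofReal_pow (by positivity),
        ENNReal.ofReal_inv_of_pos two_pos, ENNReal.ofReal_ofNat]
  _ = ENNReal.ofReal (40 / b) := by
      rw [ENNReal.tsum_mul_left, ENNReal.tsum_geometric, ENNReal.one_sub_inv_two, inv_inv,
        ← ENNReal.ofReal_ofNat 2, ← ENNReal.ofReal_mul (by positivity)]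
      ring_nf

lemma lintegral_binEntropy_deriv_compl_Icc_le (hf : IsAbsMajorant f) {b : ℝ} (hb : 0 < b) :
    ∫⁻ x in (Icc (-(b ^ 2)) (b ^ 2))ᶜ, ENNReal.ofReal (binEntropy ((1 - deriv f x) / 2))
      ≤ ENNReal.ofReal (80 / b) := by
  have hreflect : ∀ x, binEntropy ((1 - deriv f (-x)) / 2) =
      binEntropy ((1 - deriv (fun y => f (-y)) x) / 2) := fun x => by
    rw [deriv_comp_neg, sub_neg_eq_add, binEntropy_one_add_div_two]
  have hcompl : (Icc (-(b ^ 2)) (b ^ 2))ᶜ ⊆ Iio (-(b ^ 2)) ∪ Ioi (b ^ 2) := fun x hx => by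
    rw [mem_compl_iff, mem_Icc, not_and_or, not_le, not_le] at hx
    exact hx
  calc _ ≤ ∫⁻ x in Iio (-(b ^ 2)) ∪ Ioi (b ^ 2),
          ENNReal.ofReal (binEntropy ((1 - deriv f x) / 2)) := lintegral_mono_set hcompl
    _ ≤ (∫⁻ x in Ioi (b ^ 2), ENNReal.ofReal (binEntropy ((1 - deriv (fun y => f (-y)) x) / 2))) +
          ∫⁻ x in Ioi (b ^ 2), ENNReal.ofReal (binEntropy ((1 - deriv f x) / 2)) := by
        simp_rw [← hreflect]
        rw [← setLIntegral_Iio_neg_eq (fun x => ENNReal.ofReal (binEntropy ((1 - deriv f x) / 2)))]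
        exact lintegral_union_le _ _ _
    _ ≤ ENNReal.ofReal (40 / b) + ENNReal.ofReal (40 / b) :=
        add_le_add (hf.comp_neg.lintegral_binEntropy_deriv_Ioi_le hb)
          (hf.lintegral_binEntropy_deriv_Ioi_le hb)
    _ = ENNReal.ofReal (80 / b) := by
        rw [← ENNReal.ofReal_add (by positivity) (by positivity)]
        ring_nf

lemma integrable_binEntropy_deriv (hf : IsAbsMajorant f) :
    Integrable fun x => binEntropy ((1 - deriv f x) / 2) := by
  have hmeas : AEStronglyMeasurable (fun x => binEntropy ((1 - deriv f x) / 2)) :=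
    (by fun_prop : Measurable _).aestronglyMeasurable
  rw [← integrableOn_univ, ← union_compl_self (Icc (-(1 ^ 2)) (1 ^ 2))]
  refine IntegrableOn.union ?_ ?_
  · refine Measure.integrableOn_of_bounded (by simp) hmeas (M := log 2) (ae_of_all _ fun x => ?_)
    rw [norm_of_nonneg (hf.lipschitz.binEntropy_deriv_nonneg x)]
    exact binEntropy_le_log_two
  · refine ⟨hmeas.restrict, (hasFiniteIntegral_iff_ofReal
      (ae_of_all _ hf.lipschitz.binEntropy_deriv_nonneg)).2 ?_⟩
    exact (hf.lintegral_binEntropy_deriv_compl_Icc_le one_pos).trans_lt ENNReal.ofReal_lt_top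

lemma setIntegral_binEntropy_deriv_compl_Icc_le (hf : IsAbsMajorant f) {b : ℝ} (hb : 0 < b) :
    ∫ x in (Icc (-(b ^ 2)) (b ^ 2))ᶜ, binEntropy ((1 - deriv f x) / 2) ≤ 80 / b := by
  rw [integral_eq_lintegral_of_nonneg_ae (ae_of_all _ hf.lipschitz.binEntropy_deriv_nonneg)
    (by fun_prop : Measurable fun x => binEntropy ((1 - deriv f x) / 2)).aestronglyMeasurable]
  exact ENNReal.toReal_le_of_le_ofReal (by positivity)
    (hf.lintegral_binEntropy_deriv_compl_Icc_le hb)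

end IsAbsMajorant

/-- Tail tightness: With
`φ(x) = log 2 - (1/2)((1+x)log(1+x)+(1-x)log(1-x))`, for every `ε > 0` there is
`A > 0` such that for every 1-Lipschitz `f : ℝ → ℝ` with `f ≥ |·|`,
`∫ (f - |·|) ≤ 1`, and a.e. derivative `f'`, the function `φ ∘ f'` is integrable on
`ℝ` and `∫_{ℝ \ [-A,A]} φ(f'(x)) dx < ε`. -/
theorem stmt17 (φ : ℝ → ℝ)
    (hφ : ∀ x, φ x = Real.log 2 -
      (1 / 2) * ((1 + x) * Real.log (1 + x) + (1 - x) * Real.log (1 - x))) :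
    ∀ ε > (0 : ℝ), ∃ A > (0 : ℝ),
      ∀ f f' : ℝ → ℝ, LipschitzWith 1 f → (∀ x, |x| ≤ f x) →
        (∫⁻ x : ℝ, ENNReal.ofReal (f x - |x|) ≤ 1) →
        (∀ᵐ x : ℝ, HasDerivAt f (f' x) x) →
        Integrable (fun x => φ (f' x)) ∧
        (∫ x in (Set.Icc (-A) A)ᶜ, φ (f' x)) < ε := by
  obtain rfl : φ = fun t => binEntropy ((1 - t) / 2) :=
    funext fun t => (hφ t).trans (binEntropy_one_sub_div_two t).symm
  intro ε hε
  set b := 80 / ε + 1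
  have hb : 0 < b := by positivity
  refine ⟨b ^ 2, by positivity, fun f f' hlip habs hint hderiv => ?_⟩
  have hf : IsAbsMajorant f := ⟨hlip, habs, hint⟩
  have hae : (fun x => binEntropy ((1 - f' x) / 2)) =ᵐ[volume]
      fun x => binEntropy ((1 - deriv f x) / 2) :=
    hderiv.mono fun x hx => by simp only [hx.deriv]
  refine ⟨hf.integrable_binEntropy_deriv.congr hae.symm, ?_⟩
  rw [integral_congr_ae (ae_restrict_of_ae hae)]
  calc _ ≤ 80 / b := hf.setIntegral_binEntropy_deriv_compl_Icc_le hb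
    _ < ε := by rw [div_lt_comm₀ hb hε]; linarith
end
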